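/- arXiv:1804.11278 — 2 statements merged into one kernel-verified Lean document; each statement's English description precedes it below -/
import Mathlib

section
/- Suppose (f*, f_0*) is the optimal solution of the joint I-AMoD problem with KKT multipliers λ_C (customer conservation), λ_R (vehicle conservation), μ_cR ≥ 0 (road capacity), μ_cP ≥ 0 (subway capacity). If the subway fare on arc (i,j) ∈ A_P is set to p_P(i,j) = V_{D,P}·d_{ij} + μ_cP(i,j), the road toll to τ_R(i,j) = μ_cR(i,j), the per-road-arc customer price to p_R(i,j) = V_{D,R}·d_{ij} + V_E·e_{R,ij} + τ_R(i,j), and origin/destination charges to p_O(i) = −λ_R(i), p_D(i) = λ_R(i), then for each commodity m the flow f_m* satisfies the KKT stationarity conditions of the individual customer's routing problem with dual variable λ_C. -/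
theorem customer_KKT_from_joint_KKT_general
    {V M : Type*} (AR AP AW : Finset (V × V))
    (VT VDR VE VDP VQ : ℝ)
    (t d eR : V × V → ℝ) (lamC lamR : V → ℝ) (μcR μcP : V × V → ℝ)
    (f : M → V × V → ℝ)
    -- joint stationarity on road arcs
    (hroad : ∀ m : M, ∀ i j : V, (i, j) ∈ AR →
      (VT * t (i, j) + VDR * d (i, j) + VE * eR (i, j))
        + lamC j - lamC i + lamR j - lamR i + μcR (i, j)
        + 2 * VQ * f m (i, j) = 0)
    -- joint stationarity on subway arcs
    (hsub : ∀ m : M, ∀ i j : V, (i, j) ∈ AP →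
      (VT * t (i, j) + VDP * d (i, j)) + lamC j - lamC i + μcP (i, j)
        + 2 * VQ * f m (i, j) = 0)
    -- joint stationarity on walking arcs
    (hwalk : ∀ m : M, ∀ i j : V, (i, j) ∈ AW →
      VT * t (i, j) + lamC j - lamC i + 2 * VQ * f m (i, j) = 0)
    -- prices
    (pP τR pR : V × V → ℝ) (pO : V → ℝ)
    (hpP : ∀ e, pP e = VDP * d e + μcP e)
    (hτR : ∀ e, τR e = μcR e)
    (hpR : ∀ e, pR e = VDR * d e + VE * eR e + τR e)
    (hpO : ∀ i, pO i = - lamR i) :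
    -- customer stationarity with dual variable λ_C
    (∀ m : M, ∀ i j : V, (i, j) ∈ AR →
      VT * t (i, j) + pO i - pO j + pR (i, j)
        + lamC j - lamC i + 2 * VQ * f m (i, j) = 0)
    ∧ (∀ m : M, ∀ i j : V, (i, j) ∈ AP →
      VT * t (i, j) + pP (i, j) + lamC j - lamC i + 2 * VQ * f m (i, j) = 0)
    ∧ (∀ m : M, ∀ i j : V, (i, j) ∈ AW →
      VT * t (i, j) + lamC j - lamC i + 2 * VQ * f m (i, j) = 0) := by
  refine ⟨fun m i j hij => ?_, fun m i j hij => ?_, hwalk⟩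
  · rw [hpO, hpO, hpR, hτR]
    linear_combination hroad m i j hij
  · rw [hpP]
    linear_combination hsub m i j hij

/-- Suppose the optimal customer flows `f*` of the joint I-AMoD
problem satisfy the joint KKT stationarity conditions on road arcs `A_R`,
subway arcs `A_P` and walking arcs `A_W`, with multipliers `λ_C` (customer
conservation), `λ_R` (vehicle conservation), `μ_cR ≥ 0` (road capacity) and
`μ_cP ≥ 0` (subway capacity).  If prices are set as
`p_P(i,j) = V_DP·d_ij + μ_cP(i,j)`, `τ_R(i,j) = μ_cR(i,j)`,
`p_R(i,j) = V_DR·d_ij + V_E·e_R(i,j) + τ_R(i,j)`, `p_O(i) = −λ_R(i)`,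
`p_D(i) = λ_R(i)`, then for each commodity `m` the flow `f_m*` satisfies the
KKT stationarity conditions of the individual customer's routing problem with
dual variable `λ_C`. -/
theorem customer_KKT_from_joint_KKT
    {V M : Type*} (AR AP AW : Finset (V × V))
    (VT VDR VE VDP VQ : ℝ)
    (t d eR : V × V → ℝ) (lamC lamR : V → ℝ) (μcR μcP : V × V → ℝ)
    (hμcR : ∀ e, 0 ≤ μcR e) (hμcP : ∀ e, 0 ≤ μcP e)
    (f : M → V × V → ℝ)
    -- joint stationarity on road arcs
    (hroad : ∀ m : M, ∀ i j : V, (i, j) ∈ AR →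
      (VT * t (i, j) + VDR * d (i, j) + VE * eR (i, j))
        + lamC j - lamC i + lamR j - lamR i + μcR (i, j)
        + 2 * VQ * f m (i, j) = 0)
    -- joint stationarity on subway arcs
    (hsub : ∀ m : M, ∀ i j : V, (i, j) ∈ AP →
      (VT * t (i, j) + VDP * d (i, j)) + lamC j - lamC i + μcP (i, j)
        + 2 * VQ * f m (i, j) = 0)
    -- joint stationarity on walking arcs
    (hwalk : ∀ m : M, ∀ i j : V, (i, j) ∈ AW →
      VT * t (i, j) + lamC j - lamC i + 2 * VQ * f m (i, j) = 0)
    -- prices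
    (pP τR pR : V × V → ℝ) (pO pD : V → ℝ)
    (hpP : ∀ e, pP e = VDP * d e + μcP e)
    (hτR : ∀ e, τR e = μcR e)
    (hpR : ∀ e, pR e = VDR * d e + VE * eR e + τR e)
    (hpO : ∀ i, pO i = - lamR i)
    (hpD : ∀ i, pD i = lamR i) :
    -- customer stationarity with dual variable λ_C
    (∀ m : M, ∀ i j : V, (i, j) ∈ AR →
      VT * t (i, j) + pO i - pO j + pR (i, j)
        + lamC j - lamC i + 2 * VQ * f m (i, j) = 0)
    ∧ (∀ m : M, ∀ i j : V, (i, j) ∈ AP →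
      VT * t (i, j) + pP (i, j) + lamC j - lamC i + 2 * VQ * f m (i, j) = 0)
    ∧ (∀ m : M, ∀ i j : V, (i, j) ∈ AW →
      VT * t (i, j) + lamC j - lamC i + 2 * VQ * f m (i, j) = 0) :=
  customer_KKT_from_joint_KKT_general AR AP AW VT VDR VE VDP VQ t d eR lamC lamR μcR μcP f hroad
    hsub hwalk pP τR pR pO hpP hτR hpR hpO
end

section
/- Under the tolling scheme τ_R(i,j) = μ_cR(i,j), the optimal rebalancing flow f_0* of the joint I-AMoD problem satisfies the KKT stationarity conditions of the selfish AMoD operator's rebalancing problem with dual variable λ̃_R = λ_R; hence f_0* is the operator's unique optimal response. -/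
/-! Under the toll `τ_R = μ_cR` the joint stationarity condition is exactly the operator's, so the
operator's linear cost coefficient on an arc `(i, j)` is `λ_R(i) - λ_R(j) - 2 V_Q f₀*(i, j)`.
The difference `g - f₀*` of two flows satisfying vehicle conservation with the same customer flows
is a circulation, and potential differences integrate to zero against a circulation (discrete
divergence theorem). Hence the operator's cost of `g` equals that of `f₀*` plus
`V_Q ∑ (g - f₀*)²`, which is positive unless `g = f₀*` on every arc. -/

open Finset

section Circulation

variable {V R : Type*} [Fintype V] [DecidableEq V] [CommRing R] (A : Finset (V × V))

def IsCirculation (h : V × V → R) : Prop :=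
  ∀ v, ∑ i ∈ univ.filter (fun i => (i, v) ∈ A), h (i, v)
    = ∑ k ∈ univ.filter (fun k => (v, k) ∈ A), h (v, k)

lemma sum_mul_fst_eq_sum_mul_outflow (φ : V → R) (h : V × V → R) :
    ∑ e ∈ A, φ e.1 * h e = ∑ v, φ v * ∑ k ∈ univ.filter (fun k => (v, k) ∈ A), h (v, k) := by
  simp only [sum_filter, mul_sum, mul_ite, mul_zero]
  rw [← Fintype.sum_prod_type' (fun v k => if (v, k) ∈ A then φ v * h (v, k) else 0)]
  simp only [Prod.mk.eta, sum_ite_mem, univ_inter]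

lemma sum_mul_snd_eq_sum_mul_inflow (φ : V → R) (h : V × V → R) :
    ∑ e ∈ A, φ e.2 * h e = ∑ v, φ v * ∑ i ∈ univ.filter (fun i => (i, v) ∈ A), h (i, v) := by
  simp only [sum_filter, mul_sum, mul_ite, mul_zero]
  rw [Finset.sum_comm,
    ← Fintype.sum_prod_type' (fun i v => if (i, v) ∈ A then φ v * h (i, v) else 0)]
  simp only [Prod.mk.eta, sum_ite_mem, univ_inter]

variable {A}

lemma IsCirculation.sub {h₁ h₂ : V × V → R} (h₁c : IsCirculation A h₁)
    (h₂c : IsCirculation A h₂) : IsCirculation A (h₁ - h₂) := fun v => by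
  simp only [Pi.sub_apply, sum_sub_distrib, h₁c v, h₂c v]

lemma IsCirculation.sub_of_add_right {g₁ g₂ F : V × V → R} (h₁ : IsCirculation A (g₁ + F))
    (h₂ : IsCirculation A (g₂ + F)) : IsCirculation A (g₁ - g₂) := by
  simpa only [add_sub_add_right_eq_sub] using h₁.sub h₂

lemma IsCirculation.sum_potential_diff_mul_eq_zero {h : V × V → R} (hc : IsCirculation A h)
    (φ : V → R) : ∑ e ∈ A, (φ e.1 - φ e.2) * h e = 0 := by
  simp only [sub_mul, sum_sub_distrib, sum_mul_fst_eq_sum_mul_outflow,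
    sum_mul_snd_eq_sum_mul_inflow, sub_eq_zero]
  exact sum_congr rfl fun v _ => by rw [hc v]

lemma sum_quadratic_eq_add_sum_sq_of_stationary {c f₀ g : V × V → R} {q : R} (φ : V → R)
    (hstat : ∀ e ∈ A, c e + φ e.2 - φ e.1 + 2 * q * f₀ e = 0)
    (hc : IsCirculation A (g - f₀)) :
    ∑ e ∈ A, (c e * g e + q * g e ^ 2)
      = ∑ e ∈ A, (c e * f₀ e + q * f₀ e ^ 2) + q * ∑ e ∈ A, (g e - f₀ e) ^ 2 := by
  have arcwise : ∀ e ∈ A, c e * g e + q * g e ^ 2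
      = (c e * f₀ e + q * f₀ e ^ 2) + (φ e.1 - φ e.2) * (g - f₀) e + q * (g e - f₀ e) ^ 2 :=
    fun e he => by rw [Pi.sub_apply]; linear_combination (g e - f₀ e) * hstat e he
  rw [sum_congr rfl arcwise, sum_add_distrib, sum_add_distrib,
    hc.sum_potential_diff_mul_eq_zero, mul_sum, add_zero]

end Circulation

/-- Under the tolling scheme `τ_R = μ_cR`, the optimal rebalancing
flow `f₀*` of the joint I-AMoD problem (which satisfies the joint stationarity
condition `(V_DR·d + V_E·e_R) + λ_R(j) − λ_R(i) + μ_cR(i,j) + 2V_Q·f₀*(i,j) = 0`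
on every road arc) satisfies the KKT stationarity conditions of the selfish
AMoD operator's rebalancing problem with dual variable `λ̃_R = λ_R`; hence
`f₀*` is the operator's unique optimal response: it strictly beats every other
rebalancing flow satisfying vehicle conservation with the given customer
flows. -/
theorem operator_KKT_from_joint_KKT
    {VR M : Type*} [Fintype VR] [Fintype M] [DecidableEq VR]
    (AR : Finset (VR × VR))
    (VDR VE VQ : ℝ) (hVQ : 0 < VQ)
    (d eR : VR × VR → ℝ) (lamR : VR → ℝ) (μcR τR : VR × VR → ℝ)
    (hτR : ∀ e, τR e = μcR e)
    (f : M → VR × VR → ℝ) (f₀ : VR × VR → ℝ)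
    -- joint KKT stationarity on the rebalancing variables
    (hstat : ∀ i j : VR, (i, j) ∈ AR →
      (VDR * d (i, j) + VE * eR (i, j)) + lamR j - lamR i + μcR (i, j)
        + 2 * VQ * f₀ (i, j) = 0)
    -- vehicle conservation (the operator's feasible set), satisfied by f₀
    (Cons : (VR × VR → ℝ) → Prop)
    (hCons : Cons = fun g => ∀ j : VR,
      (∑ i ∈ Finset.univ.filter (fun i => (i, j) ∈ AR),
          (g (i, j) + ∑ m : M, f m (i, j)))
        = ∑ k ∈ Finset.univ.filter (fun k => (j, k) ∈ AR),
            (g (j, k) + ∑ m : M, f m (j, k)))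
    (hfeas : Cons f₀)
    -- the operator's cost
    (C : (VR × VR → ℝ) → ℝ)
    (hC : C = fun g => ∑ e ∈ AR,
      ((VDR * d e + VE * eR e + τR e) * g e + VQ * (g e) ^ 2)) :
    -- operator stationarity with dual variable λ̃_R = λ_R …
    (∀ i j : VR, (i, j) ∈ AR →
      VDR * d (i, j) + VE * eR (i, j) + τR (i, j) + lamR j - lamR i
        + 2 * VQ * f₀ (i, j) = 0)
    -- … hence f₀ is the operator's unique optimal response
    ∧ (∀ g, Cons g → (∃ e ∈ AR, g e ≠ f₀ e) → C f₀ < C g)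
    ∧ (∀ g, Cons g → C f₀ ≤ C g) := by
  subst hCons
  have operator_stat : ∀ i j : VR, (i, j) ∈ AR →
      VDR * d (i, j) + VE * eR (i, j) + τR (i, j) + lamR j - lamR i
        + 2 * VQ * f₀ (i, j) = 0 :=
    fun i j hij => by rw [hτR]; linarith [hstat i j hij]
  have cost_eq : ∀ g, IsCirculation AR (g + fun e => ∑ m, f m e) →
      C g = C f₀ + VQ * ∑ e ∈ AR, (g e - f₀ e) ^ 2 := fun g hg => by
    subst hC
    exact sum_quadratic_eq_add_sum_sq_of_stationary lamR
      (fun e he => operator_stat e.1 e.2 he)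
      (hg.sub_of_add_right hfeas)
  refine ⟨operator_stat, fun g hg ⟨e, he, hne⟩ => ?_, fun g hg => ?_⟩
  · rw [cost_eq g hg]
    exact lt_add_of_pos_right _ <| mul_pos hVQ <|
      sum_pos' (fun _ _ => sq_nonneg _) ⟨e, he, sq_pos_of_ne_zero (sub_ne_zero.mpr hne)⟩
  · rw [cost_eq g hg]
    exact le_add_of_nonneg_right <| mul_nonneg hVQ.le <| sum_nonneg fun _ _ => sq_nonneg _
end
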